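/- Cardinality of Extrema II: assume the IFS is a fractal of unity with angles θ_k = 2πN_k/M and the fixed points p_1,…,p_n are not all equal; set V := M / gcd(N_1,…,N_n,M). Then Ext(F) is finite: every extremal point of F has the form T_b(p_x) with x nonempty and focal and |b| + |x| ≤ 2V, so that |Ext(F)| is at most the number of such pairs (b,x), namely |Ext(F)| ≤ Σ_{l=1}^{2V} l·n^l. -/

import Mathlib

open Complex

noncomputable section

/-- Composition of IFS maps along a finite word: `T_a = T_{a₁} ∘ ⋯ ∘ T_{a_L}`. -/
def wordMap {n : ℕ} (T : Fin n → ℂ → ℂ) : List (Fin n) → ℂ → ℂ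
  | [] => id
  | k :: a => T k ∘ wordMap T a

/-- Product of factors along a finite word: `φ_a = φ_{a₁} ⋯ φ_{a_L}`. -/
def wordFactor {n : ℕ} (φ : Fin n → ℂ) (a : List (Fin n)) : ℂ :=
  (a.map φ).prod

/-- `e` is an extremal point of `S`: it belongs to `S` and does not lie in the open
segment between any two distinct points of `S`. -/
def IsExtremal (S : Set ℂ) (e : ℂ) : Prop :=
  e ∈ S ∧ ¬ ∃ s₁ s₂ : ℂ, s₁ ∈ S ∧ s₂ ∈ S ∧ s₁ ≠ s₂ ∧
    ∃ t : ℝ, 0 < t ∧ t < 1 ∧ e = t • s₁ + (1 - t) • s₂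

/-!
A point `e ∈ F` is `T_w(z)` with `z ∈ F` for words `w` of every length. Along a word of length
`V` two partial angle sums agree modulo `M` (they all lie in the `V` multiples of the gcd), so
`w = b x c` with `x` focal and `|b| + |x| ≤ V`. Extremality pulls back along the injective affine
map `T_b`, so `T_x(y)` is extremal for `y = T_c z`. A focal `T_x` is a homothety about `p_x` of
ratio `r ∈ (0, 1)`, and `T_x(y)` lies strictly between `y` and `T_x(T_x y)` unless `y = p_x`.
Hence `e = T_b(p_x)`, and counting the pairs `(b, x)` bounds `|Ext(F)|`.
-/

open Set

section Words

variable {n : ℕ}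

@[simp]
lemma wordMap_nil (T : Fin n → ℂ → ℂ) : wordMap T [] = id := rfl

@[simp]
lemma wordMap_cons (T : Fin n → ℂ → ℂ) (k : Fin n) (a : List (Fin n)) :
    wordMap T (k :: a) = T k ∘ wordMap T a := rfl

lemma wordMap_append (T : Fin n → ℂ → ℂ) (u v : List (Fin n)) :
    wordMap T (u ++ v) = wordMap T u ∘ wordMap T v := by
  induction u with
  | nil => rfl
  | cons k u ih => simp [ih, Function.comp_assoc]

lemma mapsTo_wordMap {T : Fin n → ℂ → ℂ} {F : Set ℂ} (hT : ∀ k, MapsTo (T k) F F)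
    (a : List (Fin n)) : MapsTo (wordMap T a) F F := by
  induction a with
  | nil => exact mapsTo_id F
  | cons k a ih => exact (hT k).comp ih

lemma exists_wordMap_eq_of_subset_iUnion {T : Fin n → ℂ → ℂ} {F : Set ℂ}
    (hF : F ⊆ ⋃ k, T k '' F) {e : ℂ} (he : e ∈ F) (L : ℕ) :
    ∃ w z, w.length = L ∧ z ∈ F ∧ e = wordMap T w z := by
  induction L with
  | zero => exact ⟨[], e, rfl, he, rfl⟩
  | succ L ih =>
    obtain ⟨w, z, hw, hz, rfl⟩ := ih
    obtain ⟨k, y, hy, rfl⟩ := mem_iUnion.mp (hF hz)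
    exact ⟨w ++ [k], y, by simp [hw], hy, by simp [wordMap_append]⟩

lemma wordFactor_cons (φ : Fin n → ℂ) (k : Fin n) (a : List (Fin n)) :
    wordFactor φ (k :: a) = φ k * wordFactor φ a := List.prod_cons

lemma wordFactor_ne_zero {φ : Fin n → ℂ} (hφ : ∀ k, φ k ≠ 0) (a : List (Fin n)) :
    wordFactor φ a ≠ 0 :=
  List.prod_ne_zero (by simpa using fun k _ => hφ k)

lemma norm_wordFactor_le_one {φ : Fin n → ℂ} (hφ : ∀ k, ‖φ k‖ ≤ 1) (a : List (Fin n)) :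
    ‖wordFactor φ a‖ ≤ 1 := by
  induction a with
  | nil => simp [wordFactor]
  | cons k a ih =>
    rw [wordFactor_cons, norm_mul]
    exact mul_le_one₀ (hφ k) (norm_nonneg _) ih

lemma norm_wordFactor_lt_one {φ : Fin n → ℂ} (hφ : ∀ k, ‖φ k‖ < 1) {a : List (Fin n)}
    (ha : a ≠ []) : ‖wordFactor φ a‖ < 1 := by
  obtain ⟨k, a, rfl⟩ := List.exists_cons_of_ne_nil ha
  rw [wordFactor_cons, norm_mul]
  exact mul_lt_one_of_nonneg_of_lt_one_left (norm_nonneg _) (hφ k)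
    (norm_wordFactor_le_one (fun k => (hφ k).le) a)

variable {p φ : Fin n → ℂ} {T : Fin n → ℂ → ℂ}

lemma wordMap_eq_add_mul (hT : ∀ k z, T k z = p k + φ k * (z - p k)) (a : List (Fin n)) :
    wordMap T a = fun z => wordMap T a 0 + wordFactor φ a * z := by
  induction a with
  | nil => ext z; simp [wordFactor]
  | cons k a ih =>
    ext z
    simp only [wordMap_cons, Function.comp_apply, hT, wordFactor_cons]
    rw [ih]
    ring

lemma wordMap_eq_fixedPoint_add_mul (hT : ∀ k z, T k z = p k + φ k * (z - p k))
    {a : List (Fin n)} {q : ℂ} (hq : wordMap T a q = q) :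
    wordMap T a = fun z => q + wordFactor φ a * (z - q) := by
  ext z
  rw [wordMap_eq_add_mul hT] at hq ⊢
  beta_reduce at hq ⊢
  linear_combination hq

end Words

lemma wordFactor_eq_norm_mul_pow {n M : ℕ} {φ : Fin n → ℂ} {N : Fin n → ℕ}
    (hunity : ∀ k, φ k = (‖φ k‖ : ℂ) *
      Complex.exp ((((2 * Real.pi * (N k : ℝ)) / (M : ℝ) : ℝ) : ℂ) * Complex.I))
    (a : List (Fin n)) :
    wordFactor φ a =
      ‖wordFactor φ a‖ * Complex.exp (2 * Real.pi * Complex.I / M) ^ (a.map N).sum := by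
  induction a with
  | nil => simp [wordFactor]
  | cons k a ih =>
    have hk : φ k = ‖φ k‖ * Complex.exp (2 * Real.pi * Complex.I / M) ^ N k := by
      rw [← Complex.exp_nat_mul]
      convert hunity k using 3
      push_cast
      ring
    rw [wordFactor_cons, norm_mul, List.map_cons, List.sum_cons, pow_add]
    nth_rewrite 1 [hk, ih]
    push_cast
    ring

lemma wordFactor_eq_norm_of_dvd {n M : ℕ} {φ : Fin n → ℂ} {N : Fin n → ℕ} (hM : M ≠ 0)
    (hunity : ∀ k, φ k = (‖φ k‖ : ℂ) *
      Complex.exp ((((2 * Real.pi * (N k : ℝ)) / (M : ℝ) : ℝ) : ℂ) * Complex.I))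
    {a : List (Fin n)} (ha : M ∣ (a.map N).sum) :
    wordFactor φ a = ‖wordFactor φ a‖ := by
  nth_rewrite 1 [wordFactor_eq_norm_mul_pow hunity a]
  rw [((Complex.isPrimitiveRoot_exp M hM).pow_eq_one_iff_dvd _).mpr ha, mul_one]

lemma IsExtremal.of_affine {S : Set ℂ} {c m z : ℂ} (hm : m ≠ 0)
    (hS : MapsTo (fun y => c + m * y) S S) (hz : z ∈ S) (he : IsExtremal S (c + m * z)) :
    IsExtremal S z := by
  refine ⟨hz, fun ⟨s₁, s₂, h₁, h₂, hne, t, ht₀, ht₁, hzt⟩ => he.2 ?_⟩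
  refine ⟨_, _, hS h₁, hS h₂, fun h => hne (mul_left_cancel₀ hm (add_left_cancel h)),
    t, ht₀, ht₁, ?_⟩
  simp only [hzt, Complex.real_smul]
  push_cast
  ring

lemma IsExtremal.eq_center_of_homothety {S : Set ℂ} {q z : ℂ} {r : ℝ} (hr₀ : 0 < r)
    (hr₁ : r < 1) (hS : MapsTo (fun y => q + r * (y - q)) S S) (hz : z ∈ S)
    (he : IsExtremal S (q + r * (z - q))) : z = q := by
  by_contra hzq
  apply he.2
  refine ⟨z, _, hz, hS (hS hz), ?_, r / (1 + r), by positivity,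
    (div_lt_one (by linarith)).mpr (by linarith), ?_⟩
  · intro h
    have h' : ((1 - r ^ 2 : ℝ) : ℂ) * (z - q) = 0 := by
      push_cast
      linear_combination h
    rcases mul_eq_zero.mp h' with h' | h'
    · norm_cast at h'
      nlinarith
    · exact hzq (sub_eq_zero.mp h')
  · have : (1 + r : ℂ) ≠ 0 := by exact_mod_cast (by positivity : (1 + r) ≠ 0)
    simp only [Complex.real_smul]
    push_cast
    field_simp
    ring

lemma exists_eq_append_dvd_sum_map {α : Type*} (f : α → ℕ) {V : ℕ} (hV : 0 < V)
    {w : List α} (hw : V ≤ w.length) :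
    ∃ b x c, w = b ++ x ++ c ∧ x ≠ [] ∧ b.length + x.length ≤ V ∧ V ∣ (x.map f).sum := by
  let s : ℕ → ℕ := fun L => ((w.take L).map f).sum
  obtain ⟨L₁, hL₁, L₂, hL₂, hne, hmod⟩ :=
    Finset.exists_ne_map_eq_of_card_lt_of_maps_to (s := Finset.range (V + 1))
      (t := Finset.range V) (f := fun L => s L % V) (by simp)
      (fun L _ => by simpa using Nat.mod_lt _ hV)
  wlog hlt : L₁ < L₂ generalizing L₁ L₂
  · exact this L₂ hL₂ L₁ hL₁ hne.symm hmod.symm (by omega)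
  rw [Finset.mem_range] at hL₁ hL₂
  have htake : w.take L₂ = w.take L₁ ++ (w.take L₂).drop L₁ := by
    conv_lhs => rw [← List.take_append_drop L₁ (w.take L₂)]
    rw [List.take_take, min_eq_left hlt.le]
  have hs : s L₂ = s L₁ + (((w.take L₂).drop L₁).map f).sum := by
    simp only [s]
    conv_lhs => rw [htake]
    rw [List.map_append, List.sum_append]
  refine ⟨w.take L₁, (w.take L₂).drop L₁, w.drop L₂, by rw [← htake, List.take_append_drop],
    ?_, ?_, ?_⟩
  · simp only [ne_eq, List.drop_eq_nil_iff, List.length_take]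
    omega
  · simp only [List.length_take, List.length_drop]
    omega
  · rw [← Nat.modEq_zero_iff_dvd]
    exact Nat.ModEq.add_left_cancel' (s L₁) (by rw [add_zero, ← hs]; exact hmod.symm)

lemma dvd_sum_map_of_dvd_sum_map_div {α : Type*} {f : α → ℕ} {g M : ℕ} (hf : ∀ a, g ∣ f a)
    (hgM : g ∣ M) {x : List α} (h : M / g ∣ (x.map (f · / g)).sum) : M ∣ (x.map f).sum := by
  have hx : (x.map f).sum = g * (x.map (f · / g)).sum := by
    rw [← List.sum_map_mul_left]
    exact congrArg List.sum (List.map_congr_left fun a _ => (Nat.mul_div_cancel' (hf a)).symm)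
  rw [hx, ← Nat.mul_div_cancel' hgM]
  exact Nat.mul_dvd_mul_left g h

theorem IsExtremal.exists_eq_wordMap_focal {n : ℕ} {p φ : Fin n → ℂ}
    (hφ : ∀ k, 0 < ‖φ k‖ ∧ ‖φ k‖ < 1)
    {T : Fin n → ℂ → ℂ} (hT : ∀ k z, T k z = p k + φ k * (z - p k))
    {F : Set ℂ} (hFinv : F = ⋃ k, T k '' F)
    {M : ℕ} (hM : 0 < M) {N : Fin n → ℕ}
    (hunity : ∀ k, φ k = (‖φ k‖ : ℂ) *
      Complex.exp ((((2 * Real.pi * (N k : ℝ)) / (M : ℝ) : ℝ) : ℂ) * Complex.I))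
    {pp : List (Fin n) → ℂ} (hpp : ∀ x, x ≠ [] → wordMap T x (pp x) = pp x)
    {e : ℂ} (he : IsExtremal F e) :
    ∃ b x : List (Fin n), x ≠ [] ∧ (∃ r : ℝ, 0 < r ∧ wordFactor φ x = (r : ℂ)) ∧
      b.length + x.length ≤ M / Nat.gcd (Finset.univ.gcd N) M ∧
      e = wordMap T b (pp x) := by
  set g := Nat.gcd (Finset.univ.gcd N) M
  have hgM : g ∣ M := Nat.gcd_dvd_right _ _
  have hgN : ∀ k, g ∣ N k := fun k =>
    (Nat.gcd_dvd_left _ _).trans (Finset.gcd_dvd (Finset.mem_univ k))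
  have hV : 0 < M / g := Nat.div_pos (Nat.le_of_dvd hM hgM) (Nat.gcd_pos_of_pos_right _ hM)
  have hmaps : ∀ k, MapsTo (T k) F F := fun k y hy => by
    rw [hFinv]
    exact mem_iUnion.mpr ⟨k, mem_image_of_mem _ hy⟩
  have hφ₀ : ∀ k, φ k ≠ 0 := fun k => norm_pos_iff.mp (hφ k).1
  obtain ⟨w, z, hw, hz, rfl⟩ := exists_wordMap_eq_of_subset_iUnion hFinv.subset he.1 (M / g)
  obtain ⟨b, x, c, rfl, hx, hlen, hdvd⟩ :=
    exists_eq_append_dvd_sum_map (fun k => N k / g) hV hw.ge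
  have hfocal : wordFactor φ x = ‖wordFactor φ x‖ :=
    wordFactor_eq_norm_of_dvd hM.ne' hunity (dvd_sum_map_of_dvd_sum_map_div hgN hgM hdvd)
  have hcz : wordMap T c z ∈ F := mapsTo_wordMap hmaps c hz
  have hext : IsExtremal F (wordMap T x (wordMap T c z)) := by
    rw [wordMap_append, wordMap_append, wordMap_eq_add_mul hT b] at he
    refine he.of_affine (wordFactor_ne_zero hφ₀ b) ?_ (mapsTo_wordMap hmaps x hcz)
    rw [← wordMap_eq_add_mul hT b]
    exact mapsTo_wordMap hmaps b
  have hpx : wordMap T c z = pp x := by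
    have hx_eq := wordMap_eq_fixedPoint_add_mul hT (hpp x hx)
    rw [hfocal] at hx_eq
    rw [hx_eq] at hext
    refine hext.eq_center_of_homothety (norm_pos_iff.mpr (wordFactor_ne_zero hφ₀ x))
      (norm_wordFactor_lt_one (fun k => (hφ k).2) hx) ?_ hcz
    rw [← hx_eq]
    exact mapsTo_wordMap hmaps x
  refine ⟨b, x, hx, ⟨_, norm_pos_iff.mpr (wordFactor_ne_zero hφ₀ x), hfocal⟩, hlen, ?_⟩
  rw [wordMap_append, wordMap_append, Function.comp_apply, Function.comp_apply, hpx,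
    (hpp x hx)]

theorem finite_and_ncard_le_of_forall_eq_apply_pair {α β : Type*} [Fintype α]
    (G : List α → List α → β) {S : Set β} {K : ℕ}
    (hS : ∀ e ∈ S, ∃ b x, x ≠ [] ∧ b.length + x.length ≤ K ∧ e = G b x) :
    S.Finite ∧ S.ncard ≤ ∑ l ∈ Finset.Icc 1 K, l * Fintype.card α ^ l := by
  classical
  -- a pair `(b, x)` with `|b| + |x| = l` is encoded by the word `b ++ x` and the cut `|b| < l`
  let D : ℕ → Finset β := fun l =>
    (Finset.range l ×ˢ (Finset.univ : Finset (List.Vector α l))).image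
      fun jw => G (jw.2.1.take jw.1) (jw.2.1.drop jw.1)
  have hSD : S ⊆ ↑((Finset.Icc 1 K).biUnion D) := by
    intro e he
    obtain ⟨b, x, hx, hlen, rfl⟩ := hS e he
    have := List.length_pos_iff.mpr hx
    rw [Finset.coe_biUnion, mem_iUnion₂]
    refine ⟨(b ++ x).length, by simp only [Finset.coe_Icc, mem_Icc, List.length_append]; omega, ?_⟩
    exact Finset.mem_image.mpr ⟨(b.length, ⟨b ++ x, rfl⟩),
      Finset.mem_product.mpr ⟨by simp [this], Finset.mem_univ _⟩, by simp⟩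
  have hD : ∀ l, (D l).card ≤ l * Fintype.card α ^ l := fun l =>
    Finset.card_image_le.trans (by simp [card_vector])
  refine ⟨(Finset.finite_toSet _).subset hSD, ?_⟩
  calc S.ncard ≤ ((Finset.Icc 1 K).biUnion D).card := by
        rw [← ncard_coe_finset]
        exact ncard_le_ncard hSD (Finset.finite_toSet _)
    _ ≤ ∑ l ∈ Finset.Icc 1 K, (D l).card := Finset.card_biUnion_le
    _ ≤ _ := Finset.sum_le_sum fun l _ => hD l

theorem cardinality_of_extrema_II_general {n : ℕ} (p φ : Fin n → ℂ)
    (hφ : ∀ k, 0 < ‖φ k‖ ∧ ‖φ k‖ < 1)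
    (T : Fin n → ℂ → ℂ) (hT : ∀ k z, T k z = p k + φ k * (z - p k))
    (F : Set ℂ)
    (hFinv : F = ⋃ k, T k '' F)
    (M : ℕ) (hM : 1 ≤ M) (N : Fin n → ℕ)
    (hunity : ∀ k, φ k = (‖φ k‖ : ℂ) *
      Complex.exp ((((2 * Real.pi * (N k : ℝ)) / (M : ℝ) : ℝ) : ℂ) * Complex.I))
    (pp : List (Fin n) → ℂ) (hpp : ∀ x, x ≠ [] → wordMap T x (pp x) = pp x) :
    {e | IsExtremal F e}.Finite ∧
    (∀ e, IsExtremal F e → ∃ (b x : List (Fin n)), x ≠ [] ∧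
      (∃ r : ℝ, 0 < r ∧ wordFactor φ x = (r : ℂ)) ∧
      b.length + x.length ≤ 2 * (M / Nat.gcd (Finset.univ.gcd N) M) ∧
      e = wordMap T b (pp x)) ∧
    {e | IsExtremal F e}.ncard ≤
      ∑ l ∈ Finset.Icc 1 (2 * (M / Nat.gcd (Finset.univ.gcd N) M)), l * n ^ l := by
  have hext : ∀ e, IsExtremal F e → ∃ (b x : List (Fin n)), x ≠ [] ∧
      (∃ r : ℝ, 0 < r ∧ wordFactor φ x = (r : ℂ)) ∧
      b.length + x.length ≤ 2 * (M / Nat.gcd (Finset.univ.gcd N) M) ∧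
      e = wordMap T b (pp x) := fun e he => by
    obtain ⟨b, x, hx, hfocal, hlen, rfl⟩ :=
      he.exists_eq_wordMap_focal hφ hT hFinv hM hunity hpp
    exact ⟨b, x, hx, hfocal, by omega, rfl⟩
  obtain ⟨hfin, hcard⟩ := finite_and_ncard_le_of_forall_eq_apply_pair
    (fun b x => wordMap T b (pp x)) (S := {e | IsExtremal F e}) fun e he => by
      obtain ⟨b, x, hx, -, hlen, rfl⟩ := hext e he
      exact ⟨b, x, hx, hlen, rfl⟩
  exact ⟨hfin, hext, by simpa using hcard⟩

/-- Cardinality of Extrema II: in a fractal of unity with angles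
`θ_k = 2πN_k/M`, not all fixed points equal, and `V := M / gcd(N₁,…,Nₙ,M)`, the set
`Ext(F)` is finite: every extremal point has the form `T_b(p_x)` with `x` nonempty focal
and `|b| + |x| ≤ 2V`, and `|Ext(F)| ≤ ∑_{l=1}^{2V} l·nˡ`. -/
theorem cardinality_of_extrema_II {n : ℕ} (hn : 1 ≤ n) (p φ : Fin n → ℂ)
    (hφ : ∀ k, 0 < ‖φ k‖ ∧ ‖φ k‖ < 1)
    (T : Fin n → ℂ → ℂ) (hT : ∀ k z, T k z = p k + φ k * (z - p k))
    (F : Set ℂ) (hFne : F.Nonempty) (hFc : IsCompact F)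
    (hFinv : F = ⋃ k, T k '' F)
    (hne : ∃ i j, p i ≠ p j)
    (M : ℕ) (hM : 1 ≤ M) (N : Fin n → ℕ) (hN : ∀ k, N k < M)
    (hunity : ∀ k, φ k = (‖φ k‖ : ℂ) *
      Complex.exp ((((2 * Real.pi * (N k : ℝ)) / (M : ℝ) : ℝ) : ℂ) * Complex.I))
    (pp : List (Fin n) → ℂ) (hpp : ∀ x, x ≠ [] → wordMap T x (pp x) = pp x) :
    {e | IsExtremal F e}.Finite ∧
    (∀ e, IsExtremal F e → ∃ (b x : List (Fin n)), x ≠ [] ∧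
      (∃ r : ℝ, 0 < r ∧ wordFactor φ x = (r : ℂ)) ∧
      b.length + x.length ≤ 2 * (M / Nat.gcd (Finset.univ.gcd N) M) ∧
      e = wordMap T b (pp x)) ∧
    {e | IsExtremal F e}.ncard ≤
      ∑ l ∈ Finset.Icc 1 (2 * (M / Nat.gcd (Finset.univ.gcd N) M)), l * n ^ l :=
  cardinality_of_extrema_II_general p φ hφ T hT F hFinv M hM N hunity pp hpp
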